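/- Let M, N be n×n matrices with A = M + N invertible, α > 0, ω ∈ [0,2), and assume H = αI + M, S = αI + N, H + F_H and S + F_S are all invertible, with J_S = (S+F_S)⁻¹S − I and P_H = H(H+F_H)⁻¹ − I satisfying ‖J_S‖ ≤ 1 and ‖P_H‖ ≤ 1. Let x = A⁻¹b, let x̂ and Δr be vectors, set r̂ = A(x − x̂) + Δr and ŷ = (2−ω)α·(S+F_S)⁻¹(H+F_H)⁻¹·r̂. Then ‖ŷ‖ ≤ c_F·(1 + (2‖P_H‖ + ‖J_S‖)·κ(A))·‖x − x̂‖ + 4·c_F·‖A⁻¹‖·‖Δr‖, where c_F = ‖I − T_F(α,ω)‖. -/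

import Mathlib

open Matrix

/-- The spectral (operator 2-)norm of a real matrix. -/
noncomputable def specNorm {n : ℕ} (A : Matrix (Fin n) (Fin n) ℝ) : ℝ :=
  ‖Matrix.toEuclideanCLM (𝕜 := ℝ) A‖

/-- The Euclidean norm of a real vector. -/
noncomputable def vecNorm {n : ℕ} (v : Fin n → ℝ) : ℝ :=
  ‖(WithLp.equiv 2 (Fin n → ℝ)).symm v‖

/-- The (2-norm) condition number `κ(B) = ‖B‖‖B⁻¹‖`. -/
noncomputable def condNum {n : ℕ} (A : Matrix (Fin n) (Fin n) ℝ) : ℝ :=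
  specNorm A * specNorm A⁻¹

/-- The GADI iteration matrix `T_F(α,ω) = S⁻¹ H⁻¹ (α² I + M N − (1−ω) α A)`
with `A = M + N`, `H = α I + M`, `S = α I + N`. -/
noncomputable def gadiTF {n : ℕ} (M N : Matrix (Fin n) (Fin n) ℝ) (α ω : ℝ) :
    Matrix (Fin n) (Fin n) ℝ :=
  (α • 1 + N)⁻¹ * (α • 1 + M)⁻¹ * ((α ^ 2) • 1 + M * N - ((1 - ω) * α) • (M + N))

/-! The identity `I − T_F = (2−ω)α S⁻¹H⁻¹A` factors the computed correction as
`ŷ = (I + J_S)(I − T_F)A⁻¹(I + P_H) r̂`. On `A(x − x̂)` the last two factors become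
`(I − T_F)(I + A⁻¹P_H A)`, of norm at most `c_F(1 + ‖P_H‖κ(A))`, and
`(1 + ‖J_S‖)(1 + ‖P_H‖κ(A)) ≤ 1 + (2‖P_H‖ + ‖J_S‖)κ(A)` because `‖J_S‖ ≤ 1` and
`‖J_S‖ = ‖J_S A A⁻¹‖ ≤ ‖J_S‖κ(A)`. On `Δr` the two perturbation factors cost at most
`(1 + ‖J_S‖)(1 + ‖P_H‖) ≤ 4`. -/

open scoped Matrix.Norms.L2Operator

theorem one_add_mul_one_add_mul_le {j p κ : ℝ} (hp : 0 ≤ p) (hκ : 0 ≤ κ) (hj : j ≤ 1)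
    (hjκ : j ≤ j * κ) : (1 + j) * (1 + p * κ) ≤ 1 + (2 * p + j) * κ := by
  nlinarith [mul_nonneg (mul_nonneg hp hκ) (sub_nonneg.2 hj)]

section SeminormedRing

variable {R : Type*} [SeminormedRing R]

theorem norm_one_add_mul_le (J X : R) : ‖(1 + J) * X‖ ≤ (1 + ‖J‖) * ‖X‖ := by
  rw [add_mul, one_mul, add_mul, one_mul]
  exact (norm_add_le _ _).trans (add_le_add_right (norm_mul_le _ _) _)

theorem norm_mul_one_add_le (X P : R) : ‖X * (1 + P)‖ ≤ ‖X‖ * (1 + ‖P‖) := by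
  rw [mul_add, mul_one, mul_add, mul_one]
  exact (norm_add_le _ _).trans (add_le_add_right (norm_mul_le _ _) _)

theorem norm_one_add_mul_mul_one_add_le (J C P : R) :
    ‖(1 + J) * C * (1 + P)‖ ≤ (1 + ‖J‖) * ‖C‖ * (1 + ‖P‖) :=
  (norm_mul_one_add_le _ _).trans (by gcongr; exact norm_one_add_mul_le _ _)

theorem norm_one_add_mul_mul_one_add_le_four {J P : R} (hJ : ‖J‖ ≤ 1) (hP : ‖P‖ ≤ 1) (C : R) :
    ‖(1 + J) * C * (1 + P)‖ ≤ 4 * ‖C‖ :=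
  calc ‖(1 + J) * C * (1 + P)‖ ≤ (1 + ‖J‖) * ‖C‖ * (1 + ‖P‖) :=
        norm_one_add_mul_mul_one_add_le _ _ _
    _ ≤ 2 * ‖C‖ * 2 := by gcongr <;> linarith
    _ = 4 * ‖C‖ := by ring

theorem norm_le_norm_mul_of_mul_eq_one {A B : R} (h : A * B = 1) (J : R) :
    ‖J‖ ≤ ‖J‖ * (‖A‖ * ‖B‖) :=
  calc ‖J‖ = ‖J * (A * B)‖ := by rw [h, mul_one]
    _ ≤ ‖J‖ * (‖A‖ * ‖B‖) := (norm_mul_le _ _).trans (by gcongr; exact norm_mul_le _ _)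

theorem norm_one_add_mul_mul_one_add_mul_le {A B J : R} (hAB : A * B = 1) (hBA : B * A = 1)
    (hJ : ‖J‖ ≤ 1) (C P : R) :
    ‖(1 + J) * (C * B) * (1 + P) * A‖ ≤ ‖C‖ * (1 + (2 * ‖P‖ + ‖J‖) * (‖A‖ * ‖B‖)) := by
  have hconj : (1 + J) * (C * B) * (1 + P) * A = (1 + J) * C * (1 + B * P * A) := by
    simp only [mul_add, add_mul, mul_one, one_mul, mul_assoc, hBA]
  have hBPA : ‖B * P * A‖ ≤ ‖P‖ * (‖A‖ * ‖B‖) :=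
    calc ‖B * P * A‖ ≤ ‖B‖ * ‖P‖ * ‖A‖ := norm_mul₃_le
      _ = ‖P‖ * (‖A‖ * ‖B‖) := by ring
  rw [hconj]
  calc ‖(1 + J) * C * (1 + B * P * A)‖
      ≤ (1 + ‖J‖) * ‖C‖ * (1 + ‖B * P * A‖) := norm_one_add_mul_mul_one_add_le _ _ _
    _ ≤ ‖C‖ * ((1 + ‖J‖) * (1 + ‖P‖ * (‖A‖ * ‖B‖))) := by
        rw [mul_comm (1 + ‖J‖), mul_assoc]
        gcongr
    _ ≤ ‖C‖ * (1 + (2 * ‖P‖ + ‖J‖) * (‖A‖ * ‖B‖)) := by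
        gcongr
        exact one_add_mul_one_add_mul_le (norm_nonneg P) (by positivity) hJ
          (norm_le_norm_mul_of_mul_eq_one hAB J)

end SeminormedRing

theorem Matrix.smul_inv_mul_inv_eq {m K : Type*} [Fintype m] [DecidableEq m] [CommRing K]
    {A H S : Matrix m m K} (hA : IsUnit A.det) (hH : IsUnit H.det) (hS : IsUnit S.det)
    (c : K) (H' S' : Matrix m m K) :
    c • (S'⁻¹ * H'⁻¹) = (S'⁻¹ * S) * ((c • (S⁻¹ * H⁻¹ * A)) * A⁻¹) * (H * H'⁻¹) := by
  simp only [smul_mul_assoc, mul_smul_comm, mul_assoc, mul_nonsing_inv_cancel_left _ _ hA,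
    mul_nonsing_inv_cancel_left _ _ hS, nonsing_inv_mul_cancel_left _ _ hH]

section Euclidean

variable {n : ℕ}

theorem one_sub_gadiTF {M N : Matrix (Fin n) (Fin n) ℝ} {α : ℝ}
    (hH : IsUnit (α • 1 + M).det) (hS : IsUnit (α • 1 + N).det) (ω : ℝ) :
    1 - gadiTF M N α ω = ((2 - ω) * α) • ((α • 1 + N)⁻¹ * (α • 1 + M)⁻¹ * (M + N)) := by
  have hHS : (α • 1 + M) * (α • 1 + N) - ((α ^ 2) • 1 + M * N - ((1 - ω) * α) • (M + N))
      = ((2 - ω) * α) • (M + N) := by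
    simp only [add_mul, mul_add, smul_mul_assoc, mul_smul_comm, one_mul, mul_one]
    module
  have hinv : (α • 1 + N)⁻¹ * (α • 1 + M)⁻¹ * ((α • 1 + M) * (α • 1 + N)) = 1 := by
    rw [mul_assoc, nonsing_inv_mul_cancel_left _ _ hH, nonsing_inv_mul _ hS]
  rw [gadiTF, ← mul_smul_comm, ← hHS, mul_sub _ ((α • 1 + M) * (α • 1 + N)), hinv]

theorem specNorm_eq_norm (A : Matrix (Fin n) (Fin n) ℝ) : specNorm A = ‖A‖ := rfl

theorem vecNorm_mulVec_le (A : Matrix (Fin n) (Fin n) ℝ) (v : Fin n → ℝ) :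
    vecNorm (A *ᵥ v) ≤ ‖A‖ * vecNorm v :=
  A.l2_opNorm_mulVec (WithLp.toLp 2 v)

theorem vecNorm_mulVec_mulVec_add_le (G A : Matrix (Fin n) (Fin n) ℝ) (u v : Fin n → ℝ) :
    vecNorm (G *ᵥ (A *ᵥ u + v)) ≤ ‖G * A‖ * vecNorm u + ‖G‖ * vecNorm v := by
  rw [mulVec_add, mulVec_mulVec]
  exact (norm_add_le _ _).trans (add_le_add (vecNorm_mulVec_le _ _) (vecNorm_mulVec_le _ _))

end Euclidean

theorem correction_norm_bound_general {n : ℕ}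
    (M N A H S F_H F_S : Matrix (Fin n) (Fin n) ℝ) (hA : A = M + N)
    (α ω : ℝ)
    (hH : H = α • 1 + M) (hS : S = α • 1 + N)
    (hAinv : IsUnit A.det) (hHinv : IsUnit H.det) (hSinv : IsUnit S.det)
    (J_S P_H : Matrix (Fin n) (Fin n) ℝ)
    (hJS : J_S = (S + F_S)⁻¹ * S - 1) (hPH : P_H = H * (H + F_H)⁻¹ - 1)
    (hJSnorm : specNorm J_S ≤ 1) (hPHnorm : specNorm P_H ≤ 1)
    (x xh Δr rh yh : Fin n → ℝ)
    (hrh : rh = A *ᵥ (x - xh) + Δr)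
    (hyh : yh = ((2 - ω) * α) • (((S + F_S)⁻¹ * (H + F_H)⁻¹) *ᵥ rh)) :
    vecNorm yh ≤
      specNorm (1 - gadiTF M N α ω) *
          (1 + (2 * specNorm P_H + specNorm J_S) * condNum A) * vecNorm (x - xh) +
        4 * specNorm (1 - gadiTF M N α ω) * specNorm A⁻¹ * vecNorm Δr := by
  set C := 1 - gadiTF M N α ω
  have hC : C = ((2 - ω) * α) • (S⁻¹ * H⁻¹ * A) := by
    subst hH hS hA
    exact one_sub_gadiTF hHinv hSinv ω
  have hy : yh = ((1 + J_S) * (C * A⁻¹) * (1 + P_H)) *ᵥ (A *ᵥ (x - xh) + Δr) := by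
    rw [hyh, hrh, ← smul_mulVec, smul_inv_mul_inv_eq hAinv hHinv hSinv, ← hC, hJS, hPH,
      add_sub_cancel, add_sub_cancel]
  simp only [condNum, specNorm_eq_norm] at hJSnorm hPHnorm ⊢
  have hGA : ‖(1 + J_S) * (C * A⁻¹) * (1 + P_H) * A‖
      ≤ ‖C‖ * (1 + (2 * ‖P_H‖ + ‖J_S‖) * (‖A‖ * ‖A⁻¹‖)) :=
    norm_one_add_mul_mul_one_add_mul_le (mul_nonsing_inv A hAinv) (nonsing_inv_mul A hAinv)
      hJSnorm C P_H
  have hG : ‖(1 + J_S) * (C * A⁻¹) * (1 + P_H)‖ ≤ 4 * (‖C‖ * ‖A⁻¹‖) :=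
    (norm_one_add_mul_mul_one_add_le_four hJSnorm hPHnorm _).trans
      (by gcongr; exact norm_mul_le _ _)
  rw [hy, mul_assoc 4]
  exact (vecNorm_mulVec_mulVec_add_le _ A _ _).trans
    (add_le_add (mul_le_mul_of_nonneg_right hGA (norm_nonneg _))
      (mul_le_mul_of_nonneg_right hG (norm_nonneg _)))

/-- **Bound on the computed correction `ŷ`.** If `J_S = (S+F_S)⁻¹S − I` and
`P_H = H(H+F_H)⁻¹ − I` satisfy `‖J_S‖, ‖P_H‖ ≤ 1`, `x = A⁻¹ b`,
`r̂ = A(x − x̂) + Δr`, `ŷ = (2−ω)α (S+F_S)⁻¹(H+F_H)⁻¹ r̂`, then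
`‖ŷ‖ ≤ c_F(1 + (2‖P_H‖ + ‖J_S‖)κ(A))‖x − x̂‖ + 4 c_F‖A⁻¹‖‖Δr‖`,
where `c_F = ‖I − T_F(α,ω)‖`. -/
theorem correction_norm_bound {n : ℕ}
    (M N A H S F_H F_S : Matrix (Fin n) (Fin n) ℝ) (hA : A = M + N)
    (α ω : ℝ) (hα : 0 < α) (hω : ω ∈ Set.Ico (0 : ℝ) 2)
    (hH : H = α • 1 + M) (hS : S = α • 1 + N)
    (hAinv : IsUnit A.det) (hHinv : IsUnit H.det) (hSinv : IsUnit S.det)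
    (hHFinv : IsUnit (H + F_H).det) (hSFinv : IsUnit (S + F_S).det)
    (J_S P_H : Matrix (Fin n) (Fin n) ℝ)
    (hJS : J_S = (S + F_S)⁻¹ * S - 1) (hPH : P_H = H * (H + F_H)⁻¹ - 1)
    (hJSnorm : specNorm J_S ≤ 1) (hPHnorm : specNorm P_H ≤ 1)
    (b x xh Δr rh yh : Fin n → ℝ)
    (hx : x = A⁻¹ *ᵥ b)
    (hrh : rh = A *ᵥ (x - xh) + Δr)
    (hyh : yh = ((2 - ω) * α) • (((S + F_S)⁻¹ * (H + F_H)⁻¹) *ᵥ rh)) :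
    vecNorm yh ≤
      specNorm (1 - gadiTF M N α ω) *
          (1 + (2 * specNorm P_H + specNorm J_S) * condNum A) * vecNorm (x - xh) +
        4 * specNorm (1 - gadiTF M N α ω) * specNorm A⁻¹ * vecNorm Δr :=
  correction_norm_bound_general M N A H S F_H F_S hA α ω hH hS hAinv hHinv hSinv J_S P_H hJS hPH
    hJSnorm hPHnorm x xh Δr rh yh hrh hyh
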